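/- Let h(x) = γx on GF(2^m) for a primitive element γ, n = 2^m, and let C_{H,h} ⊆ X^n be the associated perfect distance-3 code. Then for every k with 1 < k < n, no fixing of n − k coordinates of C_{H,h} to constants yields a perfect distance-3 code in X^k; equivalently, the matching χ^{-1}(C_{H,h}) contains no submatching of 2^{k-1} edges covering a subcube of {0,1}^n obtained by fixing n − k coordinates. -/

import Mathlib

/-- Binary words of length `n`. -/
abbrev BW (n : ℕ) := Fin n → ZMod 2

/-- Ternary words of length `n` over `{0,1,*}`, with `none` playing the role of `*`. -/
abbrev TW (n : ℕ) := Fin n → Option (ZMod 2)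

/-- Coset `{ x ∈ F^n : Σ x_i = ε, Σ x_i α_i = β }` of the extended Hamming code, with
syndromes computed in the field `F = GF(2^m)` (`x_i α_i` is the natural `ℕ`-scalar
action of the bit `x_i`). -/
def cosetF {n : ℕ} {F : Type*} [AddCommGroup F] (α : Fin n → F) (ε : ZMod 2) (β : F) :
    Set (BW n) :=
  {x | (∑ i, x i) = ε ∧ (∑ i, (x i).val • α i) = β}

/-- `r(p)` for an edge `{p, q}`: `*` where `p` and `q` differ, `p` elsewhere. -/
def rword {n : ℕ} (p q : BW n) : TW n := fun i => if p i = q i then some (p i) else none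

/-!
A codeword of `C_{H,h}` is `r(p)` for an even word `p`, the star sitting at the unique position
`i` with `α i = (γ - 1) · syndrome p`. Fixing the coordinates in `I` to `z` and restricting `p` to
the `k` free coordinates `J`, the surviving codewords correspond to the pairs `(w, j)`, `w` a word
on `J` and `j ∈ J`, with `Ψ w = (0, (γ - 1)⁻¹ α j) - κ`, where `Ψ w = (Σ w, Σ w_j α_j)` and `κ` is
the contribution of `z`. As `Ψ` is additive, their number is `2^k · #{j | target j ∈ range Ψ} /
|range Ψ|`. The range contains the `2k` elements `(1, α j)` and `(0, α j - α j₀)`, so a count of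
`2^(k-1)` puts every target in the range. Differences of targets then make
`V = {v | (0, v) ∈ range Ψ}` stable under multiplication by `(γ - 1)⁻¹`, so the multiplier ring of
`V` is a subfield containing the primitive element `γ`, whence `V = GF(2^m)` and
`|range Ψ| ≥ k + 2^m > 2k`.
-/

open Finset

namespace AddMonoidHom

variable {G H : Type*} [AddGroup G] [Fintype G] [AddGroup H] [DecidableEq H]

theorem card_fiber_mul_card_range (f : G →+ H) (h : H) [Decidable (h ∈ f.range)] :
    #{g | f g = h} * Nat.card f.range = if h ∈ f.range then Nat.card G else 0 := by
  split_ifs with hh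
  · obtain ⟨g₀, rfl⟩ := hh
    have hfiber : #{g | f g = f g₀} = Nat.card f.ker := by
      rw [← Nat.card_congr (f.fiberEquivKer g₀), Nat.card_coe_set_eq, ← Set.ncard_coe_finset]
      congr 1; ext; simp
    rw [hfiber, ← AddSubgroup.index_ker, AddSubgroup.card_mul_index]
  · rw [card_eq_zero.2, zero_mul]
    exact filter_eq_empty_iff.2 fun g _ hg => hh ⟨g, hg⟩

theorem card_pairs_mul_card_range {κ : Type*} [Fintype κ] (f : G →+ H) (t : κ → H)
    [DecidablePred (· ∈ f.range)] :
    #{x : G × κ | f x.1 = t x.2} * Nat.card f.range = #{j | t j ∈ f.range} * Nat.card G := by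
  rw [card_filter, Fintype.sum_prod_type_right, sum_mul, card_filter, sum_mul]
  refine sum_congr rfl fun j _ => ?_
  rw [← card_filter, ite_mul, one_mul, zero_mul]
  exact card_fiber_mul_card_range f (t j)

end AddMonoidHom

namespace AddSubgroup

variable {R : Type*} [Ring R]

def multiplierRing (V : AddSubgroup R) : Subring R where
  carrier := {x | ∀ v ∈ V, x * v ∈ V}
  mul_mem' hx hy v hv := by rw [mul_assoc]; exact hx _ (hy v hv)
  one_mem' v hv := by rwa [one_mul]
  add_mem' hx hy v hv := by rw [add_mul]; exact V.add_mem (hx v hv) (hy v hv)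
  zero_mem' v _ := by rw [zero_mul]; exact V.zero_mem
  neg_mem' hx v hv := by rw [neg_mul]; exact V.neg_mem (hx v hv)

theorem mem_multiplierRing {V : AddSubgroup R} {x : R} :
    x ∈ V.multiplierRing ↔ ∀ v ∈ V, x * v ∈ V :=
  Iff.rfl

end AddSubgroup

theorem Subring.inv_mem_of_fintype {K : Type*} [Field K] [Fintype K] (S : Subring K) {x : K}
    (hx : x ∈ S) : x⁻¹ ∈ S := by
  rcases eq_or_ne x 0 with rfl | hx0
  · rw [inv_zero]; exact S.zero_mem
  · have hq : 2 ≤ Fintype.card K := Fintype.one_lt_card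
    have : x ^ (Fintype.card K - 2) * x = 1 := by
      rw [← pow_succ, ← FiniteField.pow_card_sub_one_eq_one x hx0]; congr 1; omega
    rw [← eq_inv_of_mul_eq_one_left this]
    exact S.pow_mem hx _

theorem Subring.eq_top_of_pow_surjective {K : Type*} [Field K] (S : Subring K) {γ : K}
    (hS : γ ∈ S) (hγ : ∀ x : K, x ≠ 0 → ∃ j : ℕ, γ ^ j = x) : S = ⊤ := by
  refine eq_top_iff.2 fun x _ => ?_
  rcases eq_or_ne x 0 with rfl | hx0
  · exact S.zero_mem
  · obtain ⟨j, rfl⟩ := hγ x hx0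
    exact S.pow_mem hS j

theorem AddSubgroup.eq_top_of_multiplierRing_eq_top {K : Type*} [Field K] {V : AddSubgroup K}
    {v : K} (hv : v ∈ V) (hv0 : v ≠ 0) (h : V.multiplierRing = ⊤) : V = ⊤ := by
  refine eq_top_iff.2 fun x _ => ?_
  have := mem_multiplierRing.1 (h ▸ Subring.mem_top (x * v⁻¹)) v hv
  rwa [inv_mul_cancel_right₀ hv0] at this

theorem AddSubgroup.eq_top_of_inv_sub_one_mul_mem {F : Type*} [Field F] [Fintype F]
    {V : AddSubgroup F} {v : F} (hv : v ∈ V) (hv0 : v ≠ 0) {γ : F}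
    (hγ : ∀ x : F, x ≠ 0 → ∃ j : ℕ, γ ^ j = x)
    (hμ : ∀ v ∈ V, (γ - 1)⁻¹ * v ∈ V) : V = ⊤ := by
  refine eq_top_of_multiplierRing_eq_top hv hv0 (V.multiplierRing.eq_top_of_pow_surjective ?_ hγ)
  have := V.multiplierRing.inv_mem_of_fintype hμ
  rw [inv_inv] at this
  simpa using V.multiplierRing.add_mem this V.multiplierRing.one_mem

theorem ne_one_of_pow_surjective {K : Type*} [Field K] [Fintype K] (hK : 2 < Fintype.card K)
    {γ : K} (hγ : ∀ x : K, x ≠ 0 → ∃ j : ℕ, γ ^ j = x) : γ ≠ 1 := by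
  classical
  rintro rfl
  have hsub : (univ : Finset K) ⊆ {0, 1} := fun x _ => by
    rcases eq_or_ne x 0 with rfl | hx
    · exact mem_insert_self _ _
    · obtain ⟨j, rfl⟩ := hγ x hx
      simp
  have := (card_le_card hsub).trans (card_insert_le _ _)
  rw [card_univ, card_singleton] at this
  omega

section ExtSyndrome

variable {F : Type*} [Field F] [CharP F 2] {ι : Type*} [Fintype ι]

/-- Parity and syndrome of a binary word, for the extended Hamming code whose columns are
labelled by `a`. -/
def extSyndrome (a : ι → F) : (ι → ZMod 2) →+ ZMod 2 × F where
  toFun w := ∑ i, (w i, ZMod.castHom (dvd_refl 2) F (w i) * a i)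
  map_zero' := by simp
  map_add' w v := by simp only [← sum_add_distrib, Pi.add_apply, map_add, add_mul, Prod.mk_add_mk]

theorem extSyndrome_apply (a : ι → F) (w : ι → ZMod 2) :
    extSyndrome a w = (∑ i, w i, ∑ i, ZMod.castHom (dvd_refl 2) F (w i) * a i) := by
  simp [extSyndrome, Prod.ext_iff, Prod.fst_sum, Prod.snd_sum]

theorem extSyndrome_single [DecidableEq ι] (a : ι → F) (j : ι) :
    extSyndrome a (Pi.single j 1) = (1, a j) := by
  simp [extSyndrome_apply, Pi.single_apply]

theorem castHom_mul_mem (V : AddSubgroup F) (x : ZMod 2) {y : F} (hy : y ∈ V) :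
    ZMod.castHom (dvd_refl 2) F x * y ∈ V := by
  obtain rfl | rfl : x = 0 ∨ x = 1 := by decide +revert
  · simp
  · simpa

theorem extSyndrome_eq_add_restrict [DecidableEq ι] (a : ι → F) (I : Finset ι) (w : ι → ZMod 2) :
    extSyndrome a w = extSyndrome (fun i : {i // i ∈ I} => a i) (fun i => w i) +
      extSyndrome (fun i : {i // i ∉ I} => a i) (fun i => w i) := by
  simp only [extSyndrome, AddMonoidHom.coe_mk, ZeroHom.coe_mk]
  convert (Fintype.sum_subtype_add_sum_subtype (· ∈ I)
    fun i => (w i, ZMod.castHom (dvd_refl 2) F (w i) * a i)).symm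

theorem card_add_card_le_card_range_extSyndrome [Finite F] {a : ι → F}
    (ha : Function.Injective a) (S : Finset F)
    (hS : ∀ v ∈ S, ((0 : ZMod 2), v) ∈ (extSyndrome a).range) :
    Fintype.card ι + #S ≤ Nat.card (extSyndrome a).range := by
  classical
  let odd : Finset (ZMod 2 × F) := univ.image fun j => (1, a j)
  let even : Finset (ZMod 2 × F) := S.image fun v => (0, v)
  have hdisj : Disjoint odd even := by
    simp only [odd, even, disjoint_left, mem_image]
    rintro _ ⟨j, -, rfl⟩ ⟨v, -, h⟩
    exact one_ne_zero (congrArg Prod.fst h).symm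
  have hsub : (↑(odd ∪ even) : Set (ZMod 2 × F)) ⊆ (extSyndrome a).range := by
    simp only [odd, even, coe_union, coe_image, Set.union_subset_iff, Set.image_subset_iff]
    exact ⟨fun j _ => ⟨Pi.single j 1, extSyndrome_single a j⟩, hS⟩
  calc Fintype.card ι + #S = #(odd ∪ even) := by
        rw [card_union_of_disjoint hdisj,
          card_image_of_injective _ fun i j h => ha (by simpa using h),
          card_image_of_injective _ fun u v h => by simpa using h, card_univ]
    _ ≤ Nat.card (extSyndrome a).range := by
        rw [← Set.ncard_coe_finset, ← SetLike.coe_sort_coe, Nat.card_coe_set_eq]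
        exact Set.ncard_le_ncard hsub (Set.toFinite _)

theorem mul_mem_of_forall_mul_sub_mem (a : ι → F) (μ : F)
    (h : ∀ i j, ((0 : ZMod 2), μ * (a i - a j)) ∈ (extSyndrome a).range) {v : F}
    (hv : ((0 : ZMod 2), v) ∈ (extSyndrome a).range) :
    ((0 : ZMod 2), μ * v) ∈ (extSyndrome a).range := by
  set V := (extSyndrome a).range.comap (AddMonoidHom.inr (ZMod 2) F)
  obtain ⟨w, hw⟩ := hv
  rw [extSyndrome_apply, Prod.mk.injEq] at hw
  obtain ⟨hpar, rfl⟩ := hw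
  rcases isEmpty_or_nonempty ι with hι | ⟨⟨i₀⟩⟩
  · rw [univ_eq_empty, sum_empty, mul_zero]
    exact zero_mem _
  have hcast : ∑ i, ZMod.castHom (dvd_refl 2) F (w i) = 0 := by rw [← map_sum, hpar, map_zero]
  have : μ * ∑ i, ZMod.castHom (dvd_refl 2) F (w i) * a i =
      ∑ i, ZMod.castHom (dvd_refl 2) F (w i) * (μ * (a i - a i₀)) := by
    simp only [mul_sub, sum_sub_distrib, ← sum_mul, hcast, zero_mul, sub_zero, mul_sum]
    exact sum_congr rfl fun i _ => mul_left_comm _ _ _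
  rw [this]
  exact (V.sum_mem fun i _ => castHom_mul_mem V (w i) (h i i₀) : _ ∈ V)

theorem zero_sub_mem_range_extSyndrome [DecidableEq ι] (a : ι → F) (i j : ι) :
    ((0 : ZMod 2), a i - a j) ∈ (extSyndrome a).range :=
  ⟨Pi.single i 1 - Pi.single j 1, by simp [extSyndrome_single]⟩

theorem zero_mem_range_extSyndrome_of_primitive [Fintype F] {γ : F}
    (hγ : ∀ x : F, x ≠ 0 → ∃ j : ℕ, γ ^ j = x) {a : ι → F} {i j : ι} (hij : a i ≠ a j)
    (h : ∀ i j, ((0 : ZMod 2), (γ - 1)⁻¹ * (a i - a j)) ∈ (extSyndrome a).range) (v : F) :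
    ((0 : ZMod 2), v) ∈ (extSyndrome a).range := by
  classical
  let V := (extSyndrome a).range.comap (AddMonoidHom.inr (ZMod 2) F)
  have hV : V = ⊤ := AddSubgroup.eq_top_of_inv_sub_one_mul_mem
    (zero_sub_mem_range_extSyndrome a i j) (sub_ne_zero.2 hij) hγ
    fun v hv => mul_mem_of_forall_mul_sub_mem a _ h hv
  exact (hV ▸ AddSubgroup.mem_top v : v ∈ V)

theorem card_range_extSyndrome_of_card_eq [DecidableEq ι] [DecidableEq F] {κ : Type*}
    [Fintype κ] (a : ι → F) (t : κ → ZMod 2 × F) [DecidablePred (· ∈ (extSyndrome a).range)]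
    (hι : 0 < Fintype.card ι)
    (h : #{y : (ι → ZMod 2) × κ | extSyndrome a y.1 = t y.2} = 2 ^ (Fintype.card ι - 1)) :
    Nat.card (extSyndrome a).range = 2 * #{j | t j ∈ (extSyndrome a).range} := by
  have hG : Nat.card (ι → ZMod 2) = 2 * 2 ^ (Fintype.card ι - 1) := by
    rw [Nat.card_eq_fintype_card, Fintype.card_fun, ZMod.card, ← pow_succ']
    congr 1
    omega
  have := (extSyndrome a).card_pairs_mul_card_range t
  rw [h, hG, mul_left_comm, mul_comm, ← mul_assoc] at this
  exact Nat.eq_of_mul_eq_mul_right (by positivity) this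

theorem card_extSyndrome_preimage_ne [DecidableEq ι] [Fintype F] [DecidableEq F] {γ : F}
    (hγ : ∀ x : F, x ≠ 0 → ∃ j : ℕ, γ ^ j = x) {a : ι → F} (ha : Function.Injective a)
    (hι : 1 < Fintype.card ι) (hιF : Fintype.card ι < Fintype.card F) (c : ZMod 2 × F) :
    #{y : (ι → ZMod 2) × ι | extSyndrome a y.1 = ((0 : ZMod 2), (γ - 1)⁻¹ * a y.2) - c} ≠
      2 ^ (Fintype.card ι - 1) := by
  classical
  intro hcard
  set t : ι → ZMod 2 × F := fun j => ((0 : ZMod 2), (γ - 1)⁻¹ * a j) - c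
  have hR := card_range_extSyndrome_of_card_eq a t (by omega) hcard
  have hgood_le := card_filter_le (univ : Finset ι) fun j => t j ∈ (extSyndrome a).range
  rw [card_univ] at hgood_le
  obtain ⟨j₀, j₁, hj⟩ := Fintype.exists_pair_of_one_lt_card hι
  have hgood : ∀ j, t j ∈ (extSyndrome a).range := by
    have hlow := card_add_card_le_card_range_extSyndrome ha (univ.image fun j => a j - a j₀) <| by
      simp only [mem_image]
      rintro _ ⟨j, -, rfl⟩
      exact zero_sub_mem_range_extSyndrome a j j₀
    have hinj : Function.Injective fun j => a j - a j₀ := sub_left_injective.comp ha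
    rw [card_image_of_injective _ hinj, card_univ, hR] at hlow
    have hall : #{j | t j ∈ (extSyndrome a).range} = #(univ : Finset ι) := by
      rw [card_univ]
      omega
    exact fun j => card_filter_eq_iff.1 hall j (mem_univ j)
  have hzero : ∀ v : F, ((0 : ZMod 2), v) ∈ (extSyndrome a).range := by
    refine zero_mem_range_extSyndrome_of_primitive hγ (ha.ne hj) fun i j => ?_
    convert (extSyndrome a).range.sub_mem (hgood i) (hgood j) using 1
    simp [t, mul_sub]
  have hup := card_add_card_le_card_range_extSyndrome ha univ fun v _ => hzero v
  rw [card_univ, hR] at hup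
  omega

theorem card_restrict_extSyndrome_eq [DecidableEq ι] [DecidableEq F] {κ : Type*} [Fintype κ]
    (a : ι → F) (I : Finset ι) (z : ι → ZMod 2) (t : κ → ZMod 2 × F) :
    #{x : (ι → ZMod 2) × κ | extSyndrome a x.1 = t x.2 ∧ ∀ i ∈ I, x.1 i = z i} =
      #{y : ({i // i ∉ I} → ZMod 2) × κ | extSyndrome (fun i : {i // i ∉ I} => a i) y.1 =
        t y.2 - extSyndrome (fun i : {i // i ∈ I} => a i) (fun i => z i)} := by
  let extend (w : {i // i ∉ I} → ZMod 2) : ι → ZMod 2 := fun i =>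
    if h : i ∈ I then z i else w ⟨i, h⟩
  refine card_nbij' (fun x => (fun i => x.1 i, x.2)) (fun y => (extend y.1, y.2)) ?_ ?_ ?_ ?_
  · rintro ⟨p, j⟩ hx
    simp only [coe_filter, mem_univ, true_and, Set.mem_ofPred_eq] at hx ⊢
    obtain ⟨hp, hpz⟩ := hx
    have hI : (fun i : {i // i ∈ I} => p i) = fun i : {i // i ∈ I} => z i :=
      funext fun i => hpz i i.2
    rw [extSyndrome_eq_add_restrict a I, hI] at hp
    exact eq_sub_of_add_eq' hp
  · rintro ⟨w, j⟩ hy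
    simp only [coe_filter, mem_univ, true_and, Set.mem_ofPred_eq] at hy ⊢
    refine ⟨?_, fun i hi => dif_pos hi⟩
    have hI : (fun i : {i // i ∈ I} => extend w i) = fun i : {i // i ∈ I} => z i :=
      funext fun i => dif_pos i.2
    have hJ : (fun i : {i // i ∉ I} => extend w i) = w := funext fun i => dif_neg i.2
    rw [extSyndrome_eq_add_restrict a I, hI, hJ, hy, add_sub_cancel]
  · rintro ⟨p, j⟩ hx
    simp only [coe_filter, mem_univ, true_and, Set.mem_ofPred_eq] at hx
    refine Prod.ext (funext fun i => ?_) rfl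
    by_cases hi : i ∈ I
    · exact (dif_pos hi).trans (hx.2 i hi).symm
    · exact dif_neg hi
  · rintro ⟨w, j⟩ -
    exact Prod.ext (funext fun i => dif_neg i.2) rfl

end ExtSyndrome

theorem hammingDist_eq_one_iff {ι : Type*} [Fintype ι] [DecidableEq ι] (p q : ι → ZMod 2) :
    hammingDist p q = 1 ↔ ∃ i, q = p + Pi.single i 1 := by
  rw [hammingDist_eq_hammingNorm, hammingNorm, card_eq_one]
  refine exists_congr fun i => ?_
  rw [← neg_add_eq_iff_eq_add, funext_iff, Finset.ext_iff]
  refine forall_congr' fun j => ?_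
  rw [mem_filter, mem_singleton]
  rcases eq_or_ne j i with rfl | hji
  · simp only [mem_univ, true_and, Pi.single_eq_same, iff_true]
    generalize (-p + q) j = x
    revert x; decide
  · simp [hji]

/-- The code `C_{H,h}` of the statement, for `h x = γ x`. -/
def cosetPairCode {n : ℕ} {F : Type*} [Field F] (α : Fin n → F) (γ : F) : Set (TW n) :=
  {c | ∃ (β : F) (p q : BW n), p ∈ cosetF α 0 β ∧ q ∈ cosetF α 1 (γ * β) ∧
    hammingDist p q = 1 ∧ c = rword p q}

section Code

variable {n : ℕ} {F : Type*} [Field F] [CharP F 2]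

theorem mem_cosetF_iff (α : Fin n → F) (ε : ZMod 2) (β : F) (p : BW n) :
    p ∈ cosetF α ε β ↔ extSyndrome α p = (ε, β) := by
  simp [cosetF, extSyndrome_apply, nsmul_eq_mul]

theorem rword_add_single (p : BW n) (i j : Fin n) :
    rword p (p + Pi.single i 1) j = if j = i then none else some (p j) := by
  rcases eq_or_ne j i with rfl | hji
  · simp [rword]
  · simp [rword, hji]

theorem rword_add_single_inj {p p' : BW n} {i i' : Fin n} (hp : ∑ j, p j = 0)
    (hp' : ∑ j, p' j = 0) (h : rword p (p + Pi.single i 1) = rword p' (p' + Pi.single i' 1)) :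
    p = p' ∧ i = i' := by
  obtain rfl : i = i' := by
    by_contra hne
    have := congrFun h i
    rw [rword_add_single, rword_add_single, if_pos rfl, if_neg hne] at this
    cases this
  have hoff : ∀ j ≠ i, p j = p' j := fun j hj => by
    simpa [rword_add_single, hj] using congrFun h j
  refine ⟨funext fun j => ?_, rfl⟩
  rcases eq_or_ne j i with rfl | hj
  · -- the words agree off `i`, so equal parities force agreement at `i`
    have := Fintype.sum_eq_single (f := p - p') j fun k hk => sub_eq_zero.2 (hoff k hk)
    simp only [Pi.sub_apply] at this
    rw [sum_sub_distrib, hp, hp', sub_self, eq_comm, sub_eq_zero] at this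
    exact this
  · exact hoff j hj

theorem mem_cosetPairCode_iff (α : Fin n → F) {γ : F} (hγ : γ ≠ 1) {c : TW n} :
    c ∈ cosetPairCode α γ ↔
      ∃ p i, extSyndrome α p = (0, (γ - 1)⁻¹ * α i) ∧ c = rword p (p + Pi.single i 1) := by
  have hγ' : γ - 1 ≠ 0 := sub_ne_zero.2 hγ
  constructor
  · rintro ⟨β, p, q, hp, hq, hpq, rfl⟩
    rw [mem_cosetF_iff] at hp hq
    obtain ⟨i, rfl⟩ := (hammingDist_eq_one_iff p q).1 hpq
    rw [map_add, hp, extSyndrome_single, Prod.mk_add_mk, Prod.mk.injEq] at hq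
    refine ⟨p, i, ?_, rfl⟩
    rw [hp, Prod.mk.injEq, eq_inv_mul_iff_mul_eq₀ hγ']
    exact ⟨rfl, by linear_combination -hq.2⟩
  · rintro ⟨p, i, hp, rfl⟩
    refine ⟨_, p, _, (mem_cosetF_iff ..).2 hp, (mem_cosetF_iff ..).2 ?_,
      (hammingDist_eq_one_iff _ _).2 ⟨i, rfl⟩, rfl⟩
    rw [map_add, hp, extSyndrome_single, Prod.mk_add_mk, zero_add]
    congr 1
    field_simp
    ring

theorem ncard_cosetPairCode_fixed_eq [DecidableEq F] (α : Fin n → F) {γ : F} (hγ : γ ≠ 1)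
    (I : Finset (Fin n)) (z : BW n) :
    {c ∈ cosetPairCode α γ | ∀ i ∈ I, c i = some (z i)}.ncard =
      #{x : (Fin n → ZMod 2) × {i // i ∉ I} |
        extSyndrome α x.1 = (0, (γ - 1)⁻¹ * α x.2) ∧ ∀ i ∈ I, x.1 i = z i} := by
  set S : Set ((Fin n → ZMod 2) × {i // i ∉ I}) :=
    {x | extSyndrome α x.1 = (0, (γ - 1)⁻¹ * α x.2) ∧ ∀ i ∈ I, x.1 i = z i}
  have hslice : {c ∈ cosetPairCode α γ | ∀ i ∈ I, c i = some (z i)} =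
      (fun x => rword x.1 (x.1 + Pi.single (x.2 : Fin n) 1)) '' S := by
    ext c
    constructor
    · rintro ⟨hc, hcz⟩
      obtain ⟨p, i, hp, rfl⟩ := (mem_cosetPairCode_iff α hγ).1 hc
      have hi : i ∉ I := fun hi => by simpa [rword_add_single] using hcz i hi
      refine ⟨(p, ⟨i, hi⟩), ⟨hp, fun j hj => ?_⟩, rfl⟩
      simpa [rword_add_single, ne_of_mem_of_not_mem hj hi] using hcz j hj
    · rintro ⟨⟨p, i, hi⟩, ⟨hp, hpz⟩, rfl⟩
      refine ⟨(mem_cosetPairCode_iff α hγ).2 ⟨p, i, hp, rfl⟩, fun j hj => ?_⟩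
      simp only [rword_add_single, if_neg (ne_of_mem_of_not_mem hj hi)]
      exact congrArg some (hpz j hj)
  have hinj : Set.InjOn (fun x => rword x.1 (x.1 + Pi.single (x.2 : Fin n) 1)) S := by
    intro x hx y hy hxy
    have hpar : ∀ x ∈ S, ∑ j, x.1 j = 0 := fun x hx => by
      simpa [extSyndrome_apply] using congrArg Prod.fst hx.1
    obtain ⟨h1, h2⟩ := rword_add_single_inj (hpar x hx) (hpar y hy) hxy
    exact Prod.ext h1 (Subtype.ext h2)
  rw [hslice, hinj.ncard_image, ← Set.ncard_coe_finset, coe_filter]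
  simp only [mem_univ, true_and, S]

end Code

theorem stmt14_general {m : ℕ} (F : Type*) [Field F] [Fintype F]
    (hF : Fintype.card F = 2 ^ m)
    (γ : F) (hγ : ∀ x : F, x ≠ 0 → ∃ j : ℕ, γ ^ j = x)
    (α : Fin (2 ^ m) → F) (hα : Function.Bijective α) :
    let C : Set (TW (2 ^ m)) :=
      {c | ∃ (β : F) (p q : BW (2 ^ m)), p ∈ cosetF α 0 β ∧ q ∈ cosetF α 1 (γ * β) ∧
            hammingDist p q = 1 ∧ c = rword p q}
    ∀ k : ℕ, 1 < k → k < 2 ^ m →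
      ¬ ∃ (I : Finset (Fin (2 ^ m))) (z : BW (2 ^ m)),
          I.card = 2 ^ m - k ∧
          Set.ncard {c ∈ C | ∀ i ∈ I, c i = some (z i)} = 2 ^ (k - 1) := by
  intro C k hk1 hk2 ⟨I, z, hI, hslice⟩
  classical
  have : CharP F 2 := charP_of_card_eq_prime_pow hF
  have hγ1 : γ ≠ 1 := ne_one_of_pow_surjective (by omega) hγ
  have hk : Fintype.card {i // i ∉ I} = k := by
    rw [Fintype.card_subtype_compl, Fintype.card_coe, hI, Fintype.card_fin]
    omega
  refine card_extSyndrome_preimage_ne hγ (a := fun i : {i // i ∉ I} => α i)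
    (fun i j h => Subtype.ext (hα.injective h)) (by omega) (by omega)
    (extSyndrome (fun i : {i // i ∈ I} => α i) fun i => z i) ?_
  rw [hk]
  refine (card_restrict_extSyndrome_eq α I z
    fun j : {i // i ∉ I} => ((0 : ZMod 2), (γ - 1)⁻¹ * α j)).symm.trans ?_
  -- `convert` only reconciles the decidability instances of the two filters
  convert (ncard_cosetPairCode_fixed_eq α hγ1 I z).symm.trans hslice using 3

/-- let `F = GF(2^m)`, `γ` a primitive element, `h x = γx`, `n = 2^m`, and
let `C_{H,h} = ⋃_β R(H^0_β, H^1_{γβ}) ⊆ X^n` be the associated perfect distance-3 code.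
Then for every `k` with `1 < k < n`, no fixing of `n - k` coordinates to constants yields
a perfect distance-3 code in `X^k`: there is no set `I` of `n - k` coordinates and values
`z` such that the codewords of `C_{H,h}` equal to `z` on `I` number `2^(k-1)`. -/
theorem stmt14 {m : ℕ} (hm : 2 ≤ m) (F : Type*) [Field F] [Fintype F]
    (hF : Fintype.card F = 2 ^ m)
    (γ : F) (hγ : ∀ x : F, x ≠ 0 → ∃ j : ℕ, γ ^ j = x)
    (α : Fin (2 ^ m) → F) (hα : Function.Bijective α) :
    let C : Set (TW (2 ^ m)) :=
      {c | ∃ (β : F) (p q : BW (2 ^ m)), p ∈ cosetF α 0 β ∧ q ∈ cosetF α 1 (γ * β) ∧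
            hammingDist p q = 1 ∧ c = rword p q}
    ∀ k : ℕ, 1 < k → k < 2 ^ m →
      ¬ ∃ (I : Finset (Fin (2 ^ m))) (z : BW (2 ^ m)),
          I.card = 2 ^ m - k ∧
          Set.ncard {c ∈ C | ∀ i ∈ I, c i = some (z i)} = 2 ^ (k - 1) :=
  stmt14_general F hF γ hγ α hα
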